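/- Let λ be a regular cardinal, p ∈ ℙ₀, and (κ̄₀,ī₀),…,(κ̄_{n̄−1},ī_{n̄−1}) with κ̄_l ∈ Succ′ and ī_l < F(κ̄_l). Then the product partial order (ℙ₀↾t(p))↾[λ,∞) × (ℙ₁↾{(κ̄₀,ī₀),…,(κ̄_{n̄−1},ī_{n̄−1})})↾[λ,∞) is ≤λ-closed: every ≤-decreasing sequence of length at most λ has a lower bound. -/
import Mathlib


noncomputable section

open Classical

/-- Ordinals (in the base universe). -/
abbrev Ord0 : Type 1 := Ordinal.{0}
/-- Cardinals (in the base universe). -/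
abbrev Card0 : Type 1 := Cardinal.{0}

/-- Vertices of trees: pairs (κ, i) of a cardinal (the level) and an ordinal (the index). -/
abbrev Vertex : Type 1 := Card0 × Ord0

/-- κ is a successor cardinal. -/
def IsSuccCard (κ : Card0) : Prop := ∃ μ : Card0, Cardinal.aleph0 ≤ μ ∧ κ = Order.succ μ

/-- κ is an (infinite) limit cardinal. -/
def IsLimitCard (κ : Card0) : Prop := Cardinal.aleph0 ≤ κ ∧ ¬ IsSuccCard κ

/-- The modified function F_lim. -/
def FlimOf (F : Card0 → Card0) (κ : Card0) : Card0 :=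
  if κ < Cardinal.aleph Ordinal.omega0 then F Cardinal.aleph0
  else if IsLimitCard κ then F κ
  else F (sSup {lam : Card0 | lam < κ ∧ IsLimitCard lam})

/-- A set (of objects living in `Type 1`) has cardinality < κ. -/
def SetCardLT {α : Type 1} (S : Set α) (κ : Card0) : Prop :=
  Cardinal.mk ↥S < Cardinal.lift.{1} κ

/-- Raw data for conditions in ℙ₀: a set of vertices, a binary relation on vertices and
a valuation assigning to each vertex a partial 0-1-function on ordinals. -/
structure RawP0 : Type 1 where
  verts : Set Vertex
  le : Vertex → Vertex → Prop
  val : Vertex → Ord0 → Option Bool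

/-- Domain of the partial function attached to vertex v. -/
def dom0 (p : RawP0) (v : Vertex) : Set Ord0 := {ζ | p.val v ζ ≠ none}

/-- (t, le) is an F_lim-tree. -/
def IsFlimTree (Flim : Card0 → Card0) (t : Set Vertex) (le : Vertex → Vertex → Prop) : Prop :=
  (∀ v ∈ t, (v.1 = 0 ∧ v.2 = 0) ∨ (Cardinal.aleph0 ≤ v.1 ∧ v.2 < (Flim v.1).ord)) ∧
  (∀ a b, le a b → a ∈ t ∧ b ∈ t) ∧
  (∀ v ∈ t, le v v) ∧
  (∀ a b c, le a b → le b c → le a c) ∧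
  (∀ a b, le a b → le b a → a = b) ∧
  (∀ a b, le a b → a.1 ≤ b.1) ∧
  (∀ b ∈ t, ∀ κ : Card0, (κ = 0 ∨ Cardinal.aleph0 ≤ κ) → κ < b.1 →
      ∃! i : Ord0, (κ, i) ∈ t ∧ le (κ, i) b) ∧
  (∃ M : Finset Vertex, ↑M ⊆ t ∧ ∀ v ∈ t, ∃ m ∈ M, le v m) ∧
  (∀ κ : Card0, IsLimitCard κ → Cardinal.aleph0 < κ → ∀ i i' : Ord0,
      (κ, i) ∈ t → (κ, i') ∈ t →
      ({w | le w (κ, i) ∧ w ≠ (κ, i)} = {w | le w (κ, i') ∧ w ≠ (κ, i')}) → i = i')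

/-- p is a condition of the forcing ℙ₀. -/
def IsP0 (F : Card0 → Card0) (p : RawP0) : Prop :=
  IsFlimTree (FlimOf F) p.verts p.le ∧
  (∀ v, v ∉ p.verts → ∀ ζ, p.val v ζ = none) ∧
  (∀ v ∈ p.verts, ∀ μ : Card0, Cardinal.aleph0 ≤ μ → v.1 = Order.succ μ →
      (∀ ζ ∈ dom0 p v, μ.ord ≤ ζ ∧ ζ < v.1.ord) ∧ SetCardLT (dom0 p v) v.1) ∧
  (∀ v ∈ p.verts, v.1 = Cardinal.aleph0 →
      (∀ ζ ∈ dom0 p v, ζ < Cardinal.aleph0.ord) ∧ (dom0 p v).Finite) ∧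
  (∀ v ∈ p.verts, (v.1 = 0 ∨ (IsLimitCard v.1 ∧ Cardinal.aleph0 < v.1)) →
      ∀ ζ, p.val v ζ = none) ∧
  (∀ v ∈ p.verts, IsLimitCard v.1 → (v.1).IsRegular →
      SetCardLT {ζ : Ord0 | ∃ w, w ∈ p.verts ∧ IsSuccCard w.1 ∧ p.le w v ∧ ζ ∈ dom0 p w} v.1)

/-- t(q) extends t(p) as an F_lim-tree. -/
def treeLe (q p : RawP0) : Prop :=
  p.verts ⊆ q.verts ∧ ∀ a b, p.le a b → q.le a b

/-- The partial order ≤₀ on conditions of ℙ₀. -/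
def le0 (q p : RawP0) : Prop :=
  treeLe q p ∧ ∀ v ∈ p.verts, ∀ ζ b, p.val v ζ = some b → q.val v ζ = some b

/-- The class of conditions of ℙ₀. -/
def P0set (F : Card0 → Card0) : Set RawP0 := {p | IsP0 F p}

/-- Compatibility with common extension in a given subclass S. -/
def Compat0In (S : Set RawP0) (p q : RawP0) : Prop := ∃ r ∈ S, le0 r p ∧ le0 r q

/-- Compatibility in ℙ₀. -/
def Compat0 (F : Card0 → Card0) (p q : RawP0) : Prop := Compat0In (P0set F) p q

/-- The height of p is at most lam. -/
def heightLE (p : RawP0) (lam : Card0) : Prop := ∀ v ∈ p.verts, v.1 ≤ lam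

/-- The restriction p↾(λ+1) of a condition of ℙ₀ to the levels ≤ λ. -/
def restLe (lam : Card0) (p : RawP0) : RawP0 where
  verts := {v ∈ p.verts | v.1 ≤ lam}
  le := fun a b => p.le a b ∧ a.1 ≤ lam ∧ b.1 ≤ lam
  val := fun v ζ => if v.1 ≤ lam then p.val v ζ else none

/-- The restriction p↾[λ,∞) of a condition of ℙ₀ to the levels ≥ λ, with value ∅ at level λ. -/
def restGe (lam : Card0) (p : RawP0) : RawP0 where
  verts := {v ∈ p.verts | lam ≤ v.1}
  le := fun a b => p.le a b ∧ lam ≤ a.1 ∧ lam ≤ b.1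
  val := fun v ζ => if lam < v.1 then p.val v ζ else none

/-- ℙ₀↾t(p): the conditions of ℙ₀ whose domain is exactly the tree t(p). -/
def P0restTree (F : Card0 → Card0) (p : RawP0) : Set RawP0 :=
  {q | IsP0 F q ∧ q.verts = p.verts ∧ q.le = p.le}

/-- The restriction q↾t(p) of a condition q (with t(q) ≤ t(p)) to the domain t(p). -/
def restrictToTree (p q : RawP0) : RawP0 where
  verts := p.verts
  le := p.le
  val := fun v ζ => if v ∈ p.verts then q.val v ζ else none

/-- Raw data for conditions in ℙ₁: for each (successor) cardinal a partial 0-1-function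
on pairs (ζ, i). -/
abbrev P1Raw : Type 1 := Card0 → Ord0 × Ord0 → Option Bool

/-- Domain of the column at κ. -/
def dom1 (p : P1Raw) (κ : Card0) : Set (Ord0 × Ord0) := {x | p κ x ≠ none}

/-- Support of a condition of ℙ₁. -/
def supp1 (p : P1Raw) : Set Card0 := {κ | ∃ x, p κ x ≠ none}

/-- Succ′: successor cardinals κ⁺ with F(κ⁺) > F(ν⁺) for all successor cardinals ν⁺ < κ⁺. -/
def SuccPrime (F : Card0 → Card0) (κ : Card0) : Prop :=
  IsSuccCard κ ∧ ∀ ν, IsSuccCard ν → ν < κ → F ν < F κ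

/-- p is a condition of the forcing ℙ₁. -/
def IsP1 (F : Card0 → Card0) (p : P1Raw) : Prop :=
  (supp1 p).Finite ∧
  (∀ κ ∈ supp1 p, SuccPrime F κ) ∧
  (∀ κ ∈ supp1 p, ∀ μ : Card0, Cardinal.aleph0 ≤ μ → κ = Order.succ μ →
    (∀ x ∈ dom1 p κ, μ.ord ≤ x.1 ∧ x.1 < κ.ord ∧ x.2 < (F κ).ord) ∧
    SetCardLT (dom1 p κ) κ ∧
    (∀ x y, x ∈ dom1 p κ → y ∈ dom1 p κ → (x.1, y.2) ∈ dom1 p κ))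

/-- The partial order ≤₁ on conditions of ℙ₁ (reverse inclusion). -/
def le1 (q p : P1Raw) : Prop := ∀ κ x b, p κ x = some b → q κ x = some b

/-- The class of conditions of ℙ₁. -/
def P1set (F : Card0 → Card0) : Set P1Raw := {p | IsP1 F p}

/-- Compatibility with common extension in a given subclass S. -/
def Compat1In (S : Set P1Raw) (p q : P1Raw) : Prop := ∃ r ∈ S, le1 r p ∧ le1 r q

/-- Compatibility in ℙ₁. -/
def Compat1 (F : Card0 → Card0) (p q : P1Raw) : Prop := Compat1In (P1set F) p q

/-- The restriction p↾{(κ̄₀,ī₀),…}: keep, in each column κ̄_l, only the entries with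
second coordinate ī_l. -/
def restr1 (S : Set (Card0 × Ord0)) (p : P1Raw) : P1Raw :=
  fun κ x => if (κ, x.2) ∈ S then p κ x else none

/-- The restriction p↾(λ+1) of a condition of ℙ₁ to the coordinates ≤ λ. -/
def restP1le (lam : Card0) (p : P1Raw) : P1Raw :=
  fun κ x => if κ ≤ lam then p κ x else none

/-- The restriction p↾[λ,∞) of a condition of ℙ₁ to the coordinates > λ. -/
def restP1gt (lam : Card0) (p : P1Raw) : P1Raw :=
  fun κ x => if lam < κ then p κ x else none

/-- The product forcing ℙ = ℙ₀ × ℙ₁: conditions. -/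
def IsP (F : Card0 → Card0) (p : RawP0 × P1Raw) : Prop := IsP0 F p.1 ∧ IsP1 F p.2

/-- The coordinatewise order on ℙ = ℙ₀ × ℙ₁. -/
def leP (q p : RawP0 × P1Raw) : Prop := le0 q.1 p.1 ∧ le1 q.2 p.2

/-- Compatibility in ℙ = ℙ₀ × ℙ₁. -/
def CompatP (F : Card0 → Card0) (p q : RawP0 × P1Raw) : Prop :=
  ∃ r, IsP F r ∧ leP r p ∧ leP r q

-- AUX START
lemma lift_isRegular {c : Card0} (h : c.IsRegular) : (Cardinal.lift.{1} c).IsRegular := by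
  constructor
  · simpa using Cardinal.lift_le.{1}.2 h.1
  · rw [← Cardinal.lift_ord, ← Ordinal.lift_cof]
    exact Cardinal.lift_le.2 h.2

lemma setCardLT_mono {α : Type 1} {S T : Set α} {κ : Card0} (hST : S ⊆ T)
    (h : SetCardLT T κ) : SetCardLT S κ :=
  lt_of_le_of_lt (Cardinal.mk_le_mk_of_subset hST) h

lemma setCardLT_empty {α : Type 1} {κ : Card0} (hκ : 0 < κ) : SetCardLT (∅ : Set α) κ := by
  unfold SetCardLT
  rw [Cardinal.mk_emptyCollection]
  have : Cardinal.lift.{1} 0 < Cardinal.lift.{1} κ := Cardinal.lift_lt.2 hκ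
  simpa using this

lemma setCardLT_union_small {α : Type 1} {κ lam : Card0} (hκ : κ.IsRegular) (hlam : lam < κ)
    {δ : Ord0} (hδ : δ.card ≤ lam) (T : (γ : Ord0) → γ < δ → Set α) {S : Set α}
    (hS : ∀ x ∈ S, ∃ γ, ∃ h : γ < δ, x ∈ T γ h) (hT : ∀ γ h, SetCardLT (T γ h) κ) :
    SetCardLT S κ := by
  have hsub : S ⊆ ⋃ (i : Set.Iio δ), T i.1 i.2 := by
    intro x hx
    obtain ⟨γ, h, hm⟩ := hS x hx
    exact Set.mem_iUnion.2 ⟨⟨γ, h⟩, hm⟩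
  refine lt_of_le_of_lt ((Cardinal.mk_le_mk_of_subset hsub).trans
    Cardinal.mk_iUnion_le_sum_mk) ?_
  apply Cardinal.sum_lt_of_isRegular (lift_isRegular hκ)
  · calc Cardinal.mk (Set.Iio δ) = Cardinal.lift.{1} δ.card := Ordinal.mk_Iio_ordinal δ
      _ ≤ Cardinal.lift.{1} lam := Cardinal.lift_le.2 hδ
      _ < _ := Cardinal.lift_lt.2 hlam
  · exact fun i => hT i.1 i.2

/-- A "union" of a (coherent) family of partial 0-1-functions indexed by ordinals below δ. -/
def unionOpt {β : Type 1} (δ : Ord0) (g : Ord0 → β → Option Bool) : β → Option Bool :=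
  fun x => if h : ∃ γ, ∃ _ : γ < δ, g γ x ≠ none then g h.choose x else none

lemma unionOpt_orig {β : Type 1} {δ : Ord0} {g : Ord0 → β → Option Bool} {x : β}
    (h : unionOpt δ g x ≠ none) :
    ∃ γ, ∃ _ : γ < δ, g γ x ≠ none ∧ unionOpt δ g x = g γ x := by
  unfold unionOpt at h ⊢
  by_cases hex : ∃ γ, ∃ _ : γ < δ, g γ x ≠ none
  · obtain ⟨h1, h2⟩ := hex.choose_spec
    exact ⟨hex.choose, h1, h2, by rw [dif_pos hex]⟩
  · rw [dif_neg hex] at h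
    exact absurd rfl h

lemma unionOpt_some {β : Type 1} {δ : Ord0} {g : Ord0 → β → Option Bool}
    (coh : ∀ γ₁, γ₁ < δ → ∀ γ₂, γ₂ < δ → ∀ x b, g γ₁ x = some b → g γ₂ x ≠ none →
      g γ₂ x = some b)
    {γ : Ord0} {x : β} {b : Bool} (h : γ < δ) (hb : g γ x = some b) :
    unionOpt δ g x = some b := by
  have hex : ∃ γ, ∃ _ : γ < δ, g γ x ≠ none := ⟨γ, h, by rw [hb]; exact Option.some_ne_none b⟩
  unfold unionOpt
  rw [dif_pos hex]
  obtain ⟨h1, h2⟩ := hex.choose_spec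
  exact coh γ h hex.choose h1 x b hb h2
-- AUX END

/-- For a regular cardinal λ, the product
(ℙ₀↾t(p))↾[λ,∞) × (ℙ₁↾{(κ̄₀,ī₀),…})↾[λ,∞) is ≤λ-closed: every decreasing sequence of
length at most λ has a lower bound. -/
theorem statement18 (F : Card0 → Card0)
    (hF : ∀ κ, Cardinal.aleph0 ≤ κ → Order.succ (Order.succ κ) ≤ F κ)
    (hFmono : ∀ κ lam, Cardinal.aleph0 ≤ κ → κ ≤ lam → F κ ≤ F lam)
    (lam : Card0) (hlam : lam.IsRegular)
    (p : RawP0) (hp : IsP0 F p)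
    (nbar : ℕ) (κbar : Fin nbar → Card0) (ibar : Fin nbar → Ord0)
    (hκbar : ∀ l, SuccPrime F (κbar l)) (hibar : ∀ l, ibar l < (F (κbar l)).ord) :
    ∀ δ : Ord0, δ ≤ lam.ord →
    ∀ f : Ord0 → RawP0 × P1Raw,
      (∀ γ, γ < δ →
        (f γ).1 ∈ restGe lam '' P0restTree F p ∧
        (f γ).2 ∈ (fun s => restP1gt lam (restr1 (Set.range fun l => (κbar l, ibar l)) s)) ''
          P1set F) →
      (∀ γ γ', γ ≤ γ' → γ' < δ → leP (f γ') (f γ)) →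
      ∃ g : RawP0 × P1Raw,
        g.1 ∈ restGe lam '' P0restTree F p ∧
        g.2 ∈ (fun s => restP1gt lam (restr1 (Set.range fun l => (κbar l, ibar l)) s)) ''
          P1set F ∧
        ∀ γ, γ < δ → leP g (f γ) := by
  intro δ hδ f hf hdec
  -- cardinality of the index set
  have hδcard : δ.card ≤ lam := by
    have := Ordinal.card_le_card hδ
    rwa [Cardinal.card_ord] at this
  obtain ⟨hpT, hpOut, hpSucc, hpA0, hpLim, hpReg⟩ := hp
  have t6 : ∀ a b, p.le a b → a.1 ≤ b.1 := hpT.2.2.2.2.2.1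
  -- choose underlying conditions
  have hf1 : ∀ γ, γ < δ → ∃ s, (IsP0 F s ∧ s.verts = p.verts ∧ s.le = p.le) ∧
      restGe lam s = (f γ).1 := by
    intro γ h
    obtain ⟨s, hs, he⟩ := (hf γ h).1
    exact ⟨s, hs, he⟩
  choose s hs1 hseq using hf1
  have hf2 : ∀ γ, γ < δ → ∃ u, IsP1 F u ∧
      restP1gt lam (restr1 (Set.range fun l => (κbar l, ibar l)) u) = (f γ).2 := by
    intro γ h
    obtain ⟨u, hu, he⟩ := (hf γ h).2
    exact ⟨u, hu, he⟩
  choose u hu1 hu2 using hf2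
  -- basic facts about the P0 components
  have fval : ∀ γ (h : γ < δ) v ζ,
      (f γ).1.val v ζ = if lam < v.1 then (s γ h).val v ζ else none := by
    intro γ h v ζ
    rw [← hseq γ h]
    rfl
  have fA : ∀ γ (h : γ < δ) v ζ, (f γ).1.val v ζ ≠ none →
      lam < v.1 ∧ v ∈ p.verts ∧ (f γ).1.val v ζ = (s γ h).val v ζ := by
    intro γ h v ζ hne
    rw [fval γ h] at hne
    by_cases hm : lam < v.1
    · rw [if_pos hm] at hne
      refine ⟨hm, ?_, by rw [fval γ h, if_pos hm]⟩
      by_contra hv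
      have : v ∉ (s γ h).verts := by rw [(hs1 γ h).2.1]; exact hv
      exact hne ((hs1 γ h).1.2.1 v this ζ)
    · rw [if_neg hm] at hne
      exact absurd rfl hne
  have fverts : ∀ γ (h : γ < δ), (f γ).1.verts = {v ∈ p.verts | lam ≤ v.1} := by
    intro γ h
    rw [← hseq γ h]
    show {v ∈ (s γ h).verts | lam ≤ v.1} = _
    rw [(hs1 γ h).2.1]
  -- coherence of the P0 values
  have coh0 : ∀ γ₁, γ₁ < δ → ∀ γ₂, γ₂ < δ → ∀ vζ : Vertex × Ord0, ∀ b,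
      (f γ₁).1.val vζ.1 vζ.2 = some b → (f γ₂).1.val vζ.1 vζ.2 ≠ none →
      (f γ₂).1.val vζ.1 vζ.2 = some b := by
    intro γ₁ h₁ γ₂ h₂ vζ b hb hne
    obtain ⟨v, ζ⟩ := vζ
    rcases le_total γ₁ γ₂ with hle | hle
    · refine (hdec γ₁ γ₂ hle h₂).1.2 v ?_ ζ b hb
      obtain ⟨hm, hv, -⟩ := fA γ₁ h₁ v ζ (by rw [hb]; exact Option.some_ne_none b)
      rw [fverts γ₁ h₁]
      exact ⟨hv, hm.le⟩
    · obtain ⟨b', hb'⟩ := Option.ne_none_iff_exists'.1 hne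
      have hv2 : v ∈ (f γ₂).1.verts := by
        obtain ⟨hm, hv, -⟩ := fA γ₂ h₂ v ζ hne
        rw [fverts γ₂ h₂]
        exact ⟨hv, hm.le⟩
      have := (hdec γ₂ γ₁ hle h₁).1.2 v hv2 ζ b' hb'
      rw [this] at hb
      rw [hb', hb]
  -- the union of the P0 values
  set U : Vertex × Ord0 → Option Bool :=
    unionOpt δ (fun γ vζ => (f γ).1.val vζ.1 vζ.2) with hU
  have Usome : ∀ γ (h : γ < δ) v ζ b, (f γ).1.val v ζ = some b → U (v, ζ) = some b := by
    intro γ h v ζ b hb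
    exact unionOpt_some coh0 h hb
  have Uorig : ∀ v ζ, U (v, ζ) ≠ none →
      ∃ γ, ∃ _ : γ < δ, (f γ).1.val v ζ ≠ none ∧ U (v, ζ) = (f γ).1.val v ζ := by
    intro v ζ hne
    exact unionOpt_orig hne
  -- the lower bound on the P0 side
  obtain ⟨s0, hs0def⟩ : ∃ s0 : RawP0,
      s0 = ⟨p.verts, p.le, fun v ζ => if lam < v.1 then U (v, ζ) else p.val v ζ⟩ := ⟨_, rfl⟩
  have s0verts : s0.verts = p.verts := by rw [hs0def]
  have s0le : s0.le = p.le := by rw [hs0def]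
  have s0val : ∀ v ζ, s0.val v ζ = if lam < v.1 then U (v, ζ) else p.val v ζ := by
    intro v ζ; rw [hs0def]
  have s0val_low : ∀ v ζ, ¬ lam < v.1 → s0.val v ζ = p.val v ζ := by
    intro v ζ h; rw [s0val, if_neg h]
  have s0val_high : ∀ v ζ, lam < v.1 → s0.val v ζ = U (v, ζ) := by
    intro v ζ h; rw [s0val, if_pos h]
  have s0orig : ∀ v ζ, lam < v.1 → s0.val v ζ ≠ none →
      ∃ γ, ∃ h : γ < δ, v ∈ p.verts ∧ (s γ h).val v ζ ≠ none ∧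
        s0.val v ζ = (s γ h).val v ζ := by
    intro v ζ hm hne
    rw [s0val_high v ζ hm] at hne
    obtain ⟨γ, h, hne', heq⟩ := Uorig v ζ hne
    obtain ⟨-, hv, hval⟩ := fA γ h v ζ hne'
    refine ⟨γ, h, hv, by rw [← hval]; exact hne', ?_⟩
    rw [s0val_high v ζ hm, heq, hval]
  have hs0dom : ∀ v, ¬ lam < v.1 → dom0 s0 v = dom0 p v := by
    intro v hm
    ext ζ
    show s0.val v ζ ≠ none ↔ p.val v ζ ≠ none
    rw [s0val_low v ζ hm]
  -- s0 is a condition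
  have hs0P0 : IsP0 F s0 := by
    refine ⟨?_, ?_, ?_, ?_, ?_, ?_⟩
    · rw [s0verts, s0le]; exact hpT
    · intro v hv ζ
      rw [s0verts] at hv
      by_cases hm : lam < v.1
      · by_contra hne
        obtain ⟨γ, h, hv', -, -⟩ := s0orig v ζ hm hne
        exact hv hv'
      · rw [s0val_low v ζ hm]
        exact hpOut v hv ζ
    · intro v hv μ hμ hvμ
      rw [s0verts] at hv
      constructor
      · intro ζ hζ
        by_cases hm : lam < v.1
        · obtain ⟨γ, h, -, hne, -⟩ := s0orig v ζ hm hζ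
          have hv' : v ∈ (s γ h).verts := by rw [(hs1 γ h).2.1]; exact hv
          exact ((hs1 γ h).1.2.2.1 v hv' μ hμ hvμ).1 ζ hne
        · have : ζ ∈ dom0 p v := by
            have := hζ
            rwa [hs0dom v hm] at this
          exact (hpSucc v hv μ hμ hvμ).1 ζ this
      · by_cases hm : lam < v.1
        · refine setCardLT_union_small ?_ hm hδcard (fun γ h => dom0 (s γ h) v) ?_ ?_
          · rw [hvμ]; exact Cardinal.isRegular_succ hμ
          · intro ζ hζ
            obtain ⟨γ, h, -, hne, -⟩ := s0orig v ζ hm hζ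
            exact ⟨γ, h, hne⟩
          · intro γ h
            have hv' : v ∈ (s γ h).verts := by rw [(hs1 γ h).2.1]; exact hv
            exact ((hs1 γ h).1.2.2.1 v hv' μ hμ hvμ).2
        · rw [hs0dom v hm]
          exact (hpSucc v hv μ hμ hvμ).2
    · intro v hv hva
      rw [s0verts] at hv
      have hm : ¬ lam < v.1 := by rw [hva]; exact not_lt.2 hlam.1
      rw [hs0dom v hm]
      exact hpA0 v hv hva
    · intro v hv hcase ζ
      rw [s0verts] at hv
      by_cases hm : lam < v.1
      · by_contra hne
        obtain ⟨γ, h, -, hne', heq⟩ := s0orig v ζ hm hne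
        have hv' : v ∈ (s γ h).verts := by rw [(hs1 γ h).2.1]; exact hv
        exact hne' ((hs1 γ h).1.2.2.2.2.1 v hv' hcase ζ)
      · rw [s0val_low v ζ hm]
        exact hpLim v hv hcase ζ
    · intro v hv hvlim hvreg
      rw [s0verts] at hv
      rw [s0verts, s0le]
      by_cases hm : lam < v.1
      · set Ap : Set Ord0 :=
          {ζ | ∃ w, w ∈ p.verts ∧ IsSuccCard w.1 ∧ p.le w v ∧ ζ ∈ dom0 p w} with hAp
        set B : Set Ord0 :=
          {ζ | ∃ γ, ∃ h : γ < δ, ∃ w, w ∈ p.verts ∧ IsSuccCard w.1 ∧ p.le w v ∧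
            ζ ∈ dom0 (s γ h) w} with hB
        have h1 : SetCardLT Ap v.1 := hpReg v hv hvlim hvreg
        have h2 : SetCardLT B v.1 := by
          refine setCardLT_union_small hvreg hm hδcard
            (fun γ h => {ζ | ∃ w, w ∈ p.verts ∧ IsSuccCard w.1 ∧ p.le w v ∧
              ζ ∈ dom0 (s γ h) w}) ?_ ?_
          · intro ζ hζ
            exact hζ
          · intro γ h
            have hv' : v ∈ (s γ h).verts := by rw [(hs1 γ h).2.1]; exact hv
            have := (hs1 γ h).1.2.2.2.2.2 v hv' hvlim hvreg
            rw [(hs1 γ h).2.1, (hs1 γ h).2.2] at this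
            exact this
        have hsub : {ζ : Ord0 | ∃ w, w ∈ p.verts ∧ IsSuccCard w.1 ∧ p.le w v ∧
            ζ ∈ dom0 s0 w} ⊆ Ap ∪ B := by
          rintro ζ ⟨w, hw, hwsucc, hwle, hwd⟩
          by_cases hmw : lam < w.1
          · right
            obtain ⟨γ, h, hw', hne, -⟩ := s0orig w ζ hmw hwd
            exact ⟨γ, h, w, hw', hwsucc, hwle, hne⟩
          · left
            refine ⟨w, hw, hwsucc, hwle, ?_⟩
            have := hwd
            rwa [hs0dom w hmw] at this
        refine lt_of_le_of_lt (Cardinal.mk_le_mk_of_subset hsub) ?_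
        refine lt_of_le_of_lt (Cardinal.mk_union_le Ap B) ?_
        refine Cardinal.add_lt_of_lt ?_ h1 h2
        simpa using Cardinal.lift_le.{1}.2 hvreg.1
      · refine setCardLT_mono ?_ (hpReg v hv hvlim hvreg)
        rintro ζ ⟨w, hw, hwsucc, hwle, hwd⟩
        have hmw : ¬ lam < w.1 := fun hc => hm (hc.trans_le (t6 w v hwle))
        refine ⟨w, hw, hwsucc, hwle, ?_⟩
        have := hwd
        rwa [hs0dom w hmw] at this
  -- basic facts about the P1 components
  have fval1 : ∀ γ (h : γ < δ) κ x, (f γ).2 κ x =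
      if lam < κ then
        (if (κ, x.2) ∈ Set.range (fun l => (κbar l, ibar l)) then u γ h κ x else none)
      else none := by
    intro γ h κ x
    rw [← hu2 γ h]
    simp only [restP1gt, restr1]
    split_ifs <;> rfl
  have fB : ∀ γ (h : γ < δ) κ x, (f γ).2 κ x ≠ none →
      lam < κ ∧ (κ, x.2) ∈ Set.range (fun l => (κbar l, ibar l)) ∧
        (f γ).2 κ x = u γ h κ x := by
    intro γ h κ x hne
    rw [fval1 γ h] at hne
    by_cases h1 : lam < κ
    · rw [if_pos h1] at hne
      by_cases h2 : (κ, x.2) ∈ Set.range (fun l => (κbar l, ibar l))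
      · exact ⟨h1, h2, by rw [fval1 γ h, if_pos h1, if_pos h2]⟩
      · rw [if_neg h2] at hne
        exact absurd rfl hne
    · rw [if_neg h1] at hne
      exact absurd rfl hne
  have coh1 : ∀ γ₁, γ₁ < δ → ∀ γ₂, γ₂ < δ → ∀ κx : Card0 × (Ord0 × Ord0), ∀ b,
      (f γ₁).2 κx.1 κx.2 = some b → (f γ₂).2 κx.1 κx.2 ≠ none →
      (f γ₂).2 κx.1 κx.2 = some b := by
    intro γ₁ h₁ γ₂ h₂ κx b hb hne
    rcases le_total γ₁ γ₂ with hle | hle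
    · exact (hdec γ₁ γ₂ hle h₂).2 κx.1 κx.2 b hb
    · obtain ⟨b', hb'⟩ := Option.ne_none_iff_exists'.1 hne
      have := (hdec γ₂ γ₁ hle h₁).2 κx.1 κx.2 b' hb'
      rw [this] at hb
      rw [hb', hb]
  -- the lower bound on the P1 side
  obtain ⟨t0, ht0def⟩ : ∃ t0 : P1Raw,
      t0 = fun κ x => unionOpt δ (fun γ κx => (f γ).2 κx.1 κx.2) (κ, x) := ⟨_, rfl⟩
  have t0some : ∀ γ (h : γ < δ) κ x b, (f γ).2 κ x = some b → t0 κ x = some b := by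
    intro γ h κ x b hb
    rw [ht0def]
    exact unionOpt_some coh1 h hb
  have t0orig : ∀ κ x, t0 κ x ≠ none →
      ∃ γ, ∃ _ : γ < δ, (f γ).2 κ x ≠ none ∧ t0 κ x = (f γ).2 κ x := by
    intro κ x hne
    rw [ht0def] at hne ⊢
    exact unionOpt_orig hne
  have ht0P1 : IsP1 F t0 := by
    refine ⟨?_, ?_, ?_⟩
    · refine Set.Finite.subset (Set.finite_range κbar) ?_
      rintro κ ⟨x, hne⟩
      obtain ⟨γ, h, hne', -⟩ := t0orig κ x hne
      obtain ⟨-, ⟨l, hl⟩, -⟩ := fB γ h κ x hne'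
      exact ⟨l, congrArg Prod.fst hl⟩
    · rintro κ ⟨x, hne⟩
      obtain ⟨γ, h, hne', -⟩ := t0orig κ x hne
      obtain ⟨-, ⟨l, hl⟩, -⟩ := fB γ h κ x hne'
      have : κbar l = κ := congrArg Prod.fst hl
      rw [← this]
      exact hκbar l
    · intro κ hκsupp μ hμ hκμ
      obtain ⟨x₀, hx₀⟩ := hκsupp
      obtain ⟨γ₀, h₀, hne₀, -⟩ := t0orig κ x₀ hx₀
      have hlκ : lam < κ := (fB γ₀ h₀ κ x₀ hne₀).1
      have usup : ∀ γ (h : γ < δ) x, (f γ).2 κ x ≠ none → κ ∈ supp1 (u γ h) := by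
        intro γ h x hne
        obtain ⟨-, -, heq⟩ := fB γ h κ x hne
        exact ⟨x, by rw [← heq]; exact hne⟩
      refine ⟨?_, ?_, ?_⟩
      · intro x hx
        obtain ⟨γ, h, hne, -⟩ := t0orig κ x hx
        obtain ⟨-, -, heq⟩ := fB γ h κ x hne
        have hxd : x ∈ dom1 (u γ h) κ := by
          show u γ h κ x ≠ none
          rw [← heq]; exact hne
        exact ((hu1 γ h).2.2 κ (usup γ h x hne) μ hμ hκμ).1 x hxd
      · refine setCardLT_union_small ?_ hlκ hδcard (fun γ h => dom1 (u γ h) κ) ?_ ?_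
        · rw [hκμ]; exact Cardinal.isRegular_succ hμ
        · intro x hx
          obtain ⟨γ, h, hne, -⟩ := t0orig κ x hx
          obtain ⟨-, -, heq⟩ := fB γ h κ x hne
          refine ⟨γ, h, ?_⟩
          show u γ h κ x ≠ none
          rw [← heq]; exact hne
        · intro γ h
          show SetCardLT (dom1 (u γ h) κ) κ
          by_cases hs : κ ∈ supp1 (u γ h)
          · exact ((hu1 γ h).2.2 κ hs μ hμ hκμ).2.1
          · have : dom1 (u γ h) κ = ∅ := by
              ext x
              simp only [Set.mem_empty_iff_false, iff_false]
              intro hx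
              exact hs ⟨x, hx⟩
            rw [this]
            refine setCardLT_empty ?_
            rw [hκμ]
            exact lt_of_lt_of_le Cardinal.aleph0_pos (hμ.trans (Order.le_succ μ))
      · intro x y hx hy
        obtain ⟨γ₁, h₁, hne₁, -⟩ := t0orig κ x hx
        obtain ⟨γ₂, h₂, hne₂, -⟩ := t0orig κ y hy
        have key : ∀ γ (h : γ < δ), (f γ).2 κ x ≠ none → (f γ).2 κ y ≠ none →
            t0 κ (x.1, y.2) ≠ none := by
          intro γ h hnx hny
          obtain ⟨hlκ', hxS, hxu⟩ := fB γ h κ x hnx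
          obtain ⟨-, hyS, hyu⟩ := fB γ h κ y hny
          have hxd : x ∈ dom1 (u γ h) κ := by show u γ h κ x ≠ none; rw [← hxu]; exact hnx
          have hyd : y ∈ dom1 (u γ h) κ := by show u γ h κ y ≠ none; rw [← hyu]; exact hny
          have hrect := ((hu1 γ h).2.2 κ (usup γ h x hnx) μ hμ hκμ).2.2 x y hxd hyd
          have hval : (f γ).2 κ (x.1, y.2) = u γ h κ (x.1, y.2) := by
            rw [fval1 γ h, if_pos hlκ', if_pos hyS]
          obtain ⟨b, hb⟩ := Option.ne_none_iff_exists'.1 hrect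
          have : t0 κ (x.1, y.2) = some b := t0some γ h κ (x.1, y.2) b (by rw [hval, hb])
          rw [this]
          exact Option.some_ne_none b
        rcases le_total γ₁ γ₂ with hle | hle
        · refine key γ₂ h₂ ?_ hne₂
          obtain ⟨b, hb⟩ := Option.ne_none_iff_exists'.1 hne₁
          have := (hdec γ₁ γ₂ hle h₂).2 κ x b hb
          rw [this]; exact Option.some_ne_none b
        · refine key γ₁ h₁ hne₁ ?_
          obtain ⟨b, hb⟩ := Option.ne_none_iff_exists'.1 hne₂
          have := (hdec γ₂ γ₁ hle h₁).2 κ y b hb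
          rw [this]; exact Option.some_ne_none b
  -- t0 is its own restriction
  have ht0fix : restP1gt lam (restr1 (Set.range fun l => (κbar l, ibar l)) t0) = t0 := by
    funext κ x
    simp only [restP1gt, restr1]
    by_cases ht : t0 κ x = none
    · rw [ht]
      split_ifs <;> rfl
    · obtain ⟨γ, h, hne, heq⟩ := t0orig κ x ht
      obtain ⟨h1, h2, -⟩ := fB γ h κ x hne
      rw [if_pos h1, if_pos h2]
  -- putting everything together
  refine ⟨(restGe lam s0, t0), ⟨s0, ⟨⟨?_, ?_, ?_, ?_, ?_, ?_⟩, s0verts, s0le⟩, rfl⟩,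
    ⟨t0, ht0P1, ht0fix⟩, ?_⟩
  · exact hs0P0.1
  · exact hs0P0.2.1
  · exact hs0P0.2.2.1
  · exact hs0P0.2.2.2.1
  · exact hs0P0.2.2.2.2.1
  · exact hs0P0.2.2.2.2.2
  intro γ hγ
  constructor
  · refine ⟨⟨?_, ?_⟩, ?_⟩
    · intro v hv
      rw [fverts γ hγ] at hv
      show v ∈ {w ∈ s0.verts | lam ≤ w.1}
      rw [s0verts]
      exact hv
    · intro a b hab
      rw [← hseq γ hγ] at hab
      obtain ⟨h1, h2, h3⟩ := hab
      have : p.le a b := by rw [← (hs1 γ hγ).2.2]; exact h1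
      exact ⟨by rw [s0le]; exact this, h2, h3⟩
    · intro v hv ζ b hb
      obtain ⟨hm, -, -⟩ := fA γ hγ v ζ (by rw [hb]; exact Option.some_ne_none b)
      show (if lam < v.1 then s0.val v ζ else none) = some b
      rw [if_pos hm, s0val_high v ζ hm]
      exact Usome γ hγ v ζ b hb
  · intro κ x b hb
    exact t0some γ hγ κ x b hb
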